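/- For all a, b, c, d in the symmetrized tropical semiring 𝕊, if a < b and c < d, then a ⊕ c < b ⊕ d. -/

import Mathlib

/-!
Encode `x ∈ 𝕊` by its positive and negative parts `x⁺, x⁻ ∈ ℝ ∪ {-∞}`, with `⊕a ↦ (a, -∞)`,
`⊖a ↦ (-∞, a)` and `•a ↦ (a, a)`. Then `x > y` iff `x⁻ ⊔ y⁺ < x⁺ ⊔ y⁻`, and `x ⊕ y` is obtained
from the componentwise maximum of the parts by cancelling a strictly dominated part. Taking the
maximum of the inequalities for `b > a` and `d > c` gives the one for `b ⊕ d > a ⊕ c` before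
cancellation, and cancelling a dominated part never destroys a strict inequality of this shape.
-/

inductive SSign : Type where
  | pos : SSign
  | neg : SSign
  | bal : SSign
deriving DecidableEq

/-- The symmetrized tropical semiring 𝕊: the tropical zero 𝟘 = -∞ together with
elements `elem s r` where `s` is a sign (⊕, ⊖ or •) and `r` a real number. -/
inductive STrop : Type where
  | zero : STrop
  | elem : SSign → ℝ → STrop

namespace STrop

/-- membership in the signed tropical numbers 𝕋± (i.e. not balanced-nonzero). -/
def isSigned : STrop → Prop
  | elem SSign.bal _ => False
  | _ => True

/-- membership in 𝕋≥, the nonnegative tropical numbers. -/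
def nneg : STrop → Prop
  | zero => True
  | elem SSign.pos _ => True
  | _ => False

/-- membership in 𝕋≤, the nonpositive tropical numbers. -/
def npos : STrop → Prop
  | zero => True
  | elem SSign.neg _ => True
  | _ => False

/-- strictly positive signed element (sign ⊕, not 𝟘). -/
def isPos : STrop → Prop
  | elem SSign.pos _ => True
  | _ => False

/-- balanced or 𝟘 (membership in 𝕋•). -/
def balZero : STrop → Prop
  | zero => True
  | elem SSign.bal _ => True
  | _ => False

/-- the negation map ⊖. -/
def neg : STrop → STrop
  | zero => zero
  | elem SSign.pos r => elem SSign.neg r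
  | elem SSign.neg r => elem SSign.pos r
  | elem SSign.bal r => elem SSign.bal r

/-- tropical addition ⊕ on 𝕊. -/
noncomputable def add : STrop → STrop → STrop
  | zero, y => y
  | x, zero => x
  | elem s r, elem t u =>
    if r < u then elem t u
    else if u < r then elem s r
    else if s = t then elem s r
    else elem SSign.bal r

def signMul : SSign → SSign → SSign
  | SSign.pos, t => t
  | SSign.neg, SSign.pos => SSign.neg
  | SSign.neg, SSign.neg => SSign.pos
  | SSign.neg, SSign.bal => SSign.bal
  | SSign.bal, _ => SSign.bal

/-- tropical multiplication ⊙ on 𝕊. -/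
def mul : STrop → STrop → STrop
  | zero, _ => zero
  | _, zero => zero
  | elem s r, elem t u => elem (signMul s t) (r + u)

/-- a ⊖ b := a ⊕ (⊖b). -/
noncomputable def sub (x y : STrop) : STrop := add x (neg y)

/-- the tropical one, the signed element ⊕0. -/
def one : STrop := elem SSign.pos 0

/-- the absolute value |·| : 𝕊 → 𝕋≥. -/
def absS : STrop → STrop
  | zero => zero
  | elem _ r => elem SSign.pos r

/-- strict order: x > y iff x ⊖ y is a strictly positive signed element. -/
def sgt (x y : STrop) : Prop := isPos (sub x y)

/-- balance relation: x ⋈ y iff x ⊖ y is balanced or 𝟘. -/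
def bal (x y : STrop) : Prop := balZero (sub x y)

/-- the relation ⊵ : x ⊵ y iff x > y or x ⋈ y. -/
def teq (x y : STrop) : Prop := sgt x y ∨ bal x y

/-- the total order ≤ on the signed tropical numbers 𝕋±
(arbitrarily `False` whenever a balanced element is involved). -/
def sle : STrop → STrop → Prop
  | zero, zero => True
  | zero, elem SSign.pos _ => True
  | elem SSign.neg _, zero => True
  | elem SSign.neg _, elem SSign.pos _ => True
  | elem SSign.pos r, elem SSign.pos u => r ≤ u
  | elem SSign.neg r, elem SSign.neg u => u ≤ r
  | _, _ => False

/-- U(a): the set of signed numbers incomparable with a; the singleton {a}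
for signed a, and the order interval [⊖|a|, |a|] for balanced a. -/
def U : STrop → Set STrop
  | elem SSign.bal r => {x | isSigned x ∧ sle (elem SSign.neg r) x ∧ sle x (elem SSign.pos r)}
  | a => {a}

/-- tropical sum of finitely many elements of 𝕊. -/
noncomputable def sumFin : ∀ {n : ℕ}, (Fin n → STrop) → STrop
  | 0, _ => zero
  | _ + 1, f => add (f 0) (sumFin fun i => f i.succ)

/-- matrix–vector product A ⊙ x over 𝕊. -/
noncomputable def mv {d n : ℕ} (A : Fin d → Fin n → STrop) (x : Fin n → STrop) : Fin d → STrop :=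
  fun i => sumFin fun j => mul (A i j) (x j)

/-- vectors in 𝕋±^d. -/
def isSignedVec {d : ℕ} (v : Fin d → STrop) : Prop := ∀ i, isSigned (v i)

/-- the signed tropical convex hull of the columns of a matrix A:
tconv(A) = {z ∈ 𝕋±^d : z ⋈ A⊙x for some x ∈ 𝕋≥^n with ⊕_j x_j = 0}. -/
def tconv {d n : ℕ} (A : Fin d → Fin n → STrop) : Set (Fin d → STrop) :=
  {z | isSignedVec z ∧ ∃ x : Fin n → STrop,
    (∀ j, nneg (x j)) ∧ sumFin x = one ∧ ∀ i, bal (z i) (mv A x i)}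

/-- the signed tropical convex hull of an arbitrary set: the union of the hulls
of all finite collections of points of M. -/
def tconvSet {d : ℕ} (M : Set (Fin d → STrop)) : Set (Fin d → STrop) :=
  ⋃ (n : ℕ) (A : Fin d → Fin n → STrop) (_ : ∀ j, (fun i => A i j) ∈ M), tconv A

/-- a set M ⊆ 𝕋±^d is tropically convex iff M = tconv(M). -/
def TropConvex {d : ℕ} (M : Set (Fin d → STrop)) : Prop := M = tconvSet M

/-- evaluation a ⊙ (0, x₁, …, x_d)ᵀ of an affine functional. -/
noncomputable def affEval {d : ℕ} (a : Fin (d + 1) → STrop) (x : Fin d → STrop) : STrop :=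
  sumFin fun j => mul (a j) ((Fin.cons one x : Fin (d + 1) → STrop) j)

/-- the open signed tropical halfspace H⁺(a) = {x ∈ 𝕋±^d : a⊙(0,x)ᵀ > 𝟘}. -/
def Hopen {d : ℕ} (a : Fin (d + 1) → STrop) : Set (Fin d → STrop) :=
  {x | isSignedVec x ∧ sgt (affEval a x) zero}

/-- the closed signed tropical halfspace H̄⁺(a) = {x ∈ 𝕋±^d : a⊙(0,x)ᵀ ⊵ 𝟘}. -/
def Hclosed {d : ℕ} (a : Fin (d + 1) → STrop) : Set (Fin d → STrop) :=
  {x | isSignedVec x ∧ teq (affEval a x) zero}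

/-- the non-negative kernel nnker(A). -/
def nnker {d n : ℕ} (A : Fin d → Fin n → STrop) : Set (Fin n → STrop) :=
  {x | (∀ j, nneg (x j)) ∧ x ≠ (fun _ => zero) ∧ ∀ i, balZero (mv A x i)}

/-- the open tropical cone sep(A) = {y ∈ 𝕋±^d : yᵀ⊙A > 𝟘 componentwise}. -/
def sep {d : ℕ} {J : Type} (A : Fin d → J → STrop) : Set (Fin d → STrop) :=
  {y | isSignedVec y ∧ ∀ j, isPos (sumFin fun i => mul (y i) (A i j))}

end STrop

namespace STrop

section Cancel

variable {α : Type*} [LinearOrder α] [OrderBot α]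

/-- What is left of the part `p` of an element of `𝕊` after cancellation against the opposite
part `n`: both survive when they are equal, which gives a balanced element. -/
def cancel (p n : α) : α := if n ≤ p then p else ⊥

theorem cancel_sup_lt_cancel_sup {p n p' n' : α} (h : n ⊔ n' < p ⊔ p') :
    cancel n p ⊔ n' < cancel p n ⊔ p' := by
  unfold cancel
  split_ifs with hpn hnp hnp
  · rwa [le_antisymm hpn hnp] at h ⊢
  · -- `p < n ≤ n ⊔ n' < p ⊔ p'` forces `p ⊔ p' = p'`
    have hp : p ≤ p' := le_of_not_ge fun hp' => by
      rw [sup_eq_left.mpr hp'] at h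
      exact hnp (le_sup_left.trans h.le)
    rwa [sup_eq_right.mpr hp, ← bot_sup_eq p'] at h
  · simpa using le_sup_right.trans_lt h
  · exact ((le_total p n).elim hpn hnp).elim

theorem cancel_lt_cancel_iff {p n : α} : cancel n p < cancel p n ↔ n < p := by
  refine ⟨fun h => ?_, fun h => ?_⟩
  · unfold cancel at h
    split_ifs at h <;> order
  · have h' : n ⊔ ⊥ < p ⊔ ⊥ := by simpa only [sup_bot_eq] using h
    simpa only [sup_bot_eq] using cancel_sup_lt_cancel_sup h'

end Cancel

noncomputable def posPart : STrop → WithBot ℝ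
  | zero => ⊥
  | elem SSign.pos r => r
  | elem SSign.neg _ => ⊥
  | elem SSign.bal r => r

noncomputable def negPart : STrop → WithBot ℝ
  | zero => ⊥
  | elem SSign.pos _ => ⊥
  | elem SSign.neg r => r
  | elem SSign.bal r => r

theorem posPart_neg (x : STrop) : posPart (neg x) = negPart x := by
  rcases x with _ | ⟨_ | _ | _, r⟩ <;> rfl

theorem negPart_neg (x : STrop) : negPart (neg x) = posPart x := by
  rcases x with _ | ⟨_ | _ | _, r⟩ <;> rfl

theorem isPos_iff_negPart_lt_posPart (x : STrop) : isPos x ↔ negPart x < posPart x := by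
  rcases x with _ | ⟨_ | _ | _, r⟩ <;> simp [isPos, posPart, negPart]

theorem posPart_add (x y : STrop) :
    posPart (add x y) = cancel (posPart x ⊔ posPart y) (negPart x ⊔ negPart y) := by
  rcases x with _ | ⟨_ | _ | _, r⟩ <;> rcases y with _ | ⟨_ | _ | _, u⟩ <;>
    simp [add, posPart, negPart, cancel] <;> split_ifs <;> simp_all <;> order

theorem negPart_add (x y : STrop) :
    negPart (add x y) = cancel (negPart x ⊔ negPart y) (posPart x ⊔ posPart y) := by
  rcases x with _ | ⟨_ | _ | _, r⟩ <;> rcases y with _ | ⟨_ | _ | _, u⟩ <;>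
    simp [add, posPart, negPart, cancel] <;> split_ifs <;> simp_all <;> order

theorem sgt_iff (x y : STrop) : sgt x y ↔ negPart x ⊔ posPart y < posPart x ⊔ negPart y := by
  rw [sgt, sub, isPos_iff_negPart_lt_posPart, posPart_add, negPart_add, posPart_neg, negPart_neg,
    cancel_lt_cancel_iff]

end STrop

/-- if a < b and c < d in 𝕊, then a ⊕ c < b ⊕ d. -/
theorem adding_strict_inequalities (a b c d : STrop)
    (h1 : STrop.sgt b a) (h2 : STrop.sgt d c) :
    STrop.sgt (STrop.add b d) (STrop.add a c) := by
  open STrop in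
  rw [sgt_iff] at h1 h2 ⊢
  simp only [posPart_add, negPart_add]
  apply cancel_sup_lt_cancel_sup
  rw [sup_comm (negPart b ⊔ _), sup_comm (posPart b ⊔ _)]
  apply cancel_sup_lt_cancel_sup
  calc posPart a ⊔ posPart c ⊔ (negPart b ⊔ negPart d)
      = (negPart b ⊔ posPart a) ⊔ (negPart d ⊔ posPart c) := by ac_rfl
    _ < (posPart b ⊔ negPart a) ⊔ (posPart d ⊔ negPart c) := max_lt_max h1 h2
    _ = negPart a ⊔ negPart c ⊔ (posPart b ⊔ posPart d) := by ac_rfl
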